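/- For all matrices A, H ∈ ℝ^{p×l}: ‖A + H‖_* ≥ ‖A‖_* + ‖P⊥_A(H)‖_* − ‖P_A(H)‖_*. -/

import Mathlib

open MeasureTheory ProbabilityTheory Matrix
open scoped ENNReal

set_option linter.unusedVariables false

/-- Frobenius norm of a matrix. -/
noncomputable def frobNorm {p l : ℕ} (A : Matrix (Fin p) (Fin l) ℝ) : ℝ :=
  Real.sqrt (∑ i, ∑ j, (A i j)^2)

/-- Nuclear (trace) norm: the sum of the singular values of `A`. -/
noncomputable def nucNorm {p l : ℕ} (A : Matrix (Fin p) (Fin l) ℝ) : ℝ :=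
  ∑ i, Real.sqrt ((show (Aᵀ * A).IsHermitian by
    simpa using Matrix.isHermitian_conjTranspose_mul_self A).eigenvalues i)

/-- Operator norm (largest singular value) of a matrix. -/
noncomputable def opNorm {p l : ℕ} (A : Matrix (Fin p) (Fin l) ℝ) : ℝ :=
  ‖LinearMap.toContinuousLinearMap (Matrix.toEuclideanLin A)‖

/-- Trace inner product `⟨A,B⟩ = tr(AᵀB)`. -/
def mInner {p l : ℕ} (A B : Matrix (Fin p) (Fin l) ℝ) : ℝ :=
  ∑ i, ∑ j, A i j * B i j

/-- The matrix `X = W φ(t)ᵀ`. -/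
noncomputable def Xmat {p : ℕ} (l : ℕ) (φ : ℕ → ℝ → ℝ) (w : Fin p → ℝ) (x : ℝ) :
    Matrix (Fin p) (Fin l) ℝ :=
  Matrix.of fun a b => w a * φ (b : ℕ) x

/-- The remainder `ρ^(m)` of the expansion of `f` over the first `m` basis functions,
with coefficients `⟨f, φ_j⟩_{L²(dμ)}`. -/
noncomputable def remainder (μ : Measure ℝ) (φ : ℕ → ℝ → ℝ) (f : ℝ → ℝ)
    (m : ℕ) (x : ℝ) : ℝ :=
  f x - ∑ j ∈ Finset.range m, (∫ y, f y * φ j y ∂μ) * φ j x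

/-- Support of a measure on ℝ. -/
def measSupport (μ : Measure ℝ) : Set ℝ := {x | ∀ U ∈ nhds x, 0 < μ U}

/-- Orthogonal projection onto a subspace, as an endomorphism. -/
noncomputable def projMap {m : ℕ} (S : Submodule ℝ (EuclideanSpace ℝ (Fin m))) :
    EuclideanSpace ℝ (Fin m) →ₗ[ℝ] EuclideanSpace ℝ (Fin m) :=
  S.subtype ∘ₗ (S.orthogonalProjectionOnto).toLinearMap

/-- Column space of `A` (the span of its left singular vectors). -/
noncomputable def colSpace {p l : ℕ} (A : Matrix (Fin p) (Fin l) ℝ) :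
    Submodule ℝ (EuclideanSpace ℝ (Fin p)) :=
  LinearMap.range (Matrix.toEuclideanLin A)

/-- `P⊥_A(B) = P_{S₁(A)⊥} B P_{S₂(A)⊥}`, where `S₁(A)` is the column space of `A`
and `S₂(A)` its row space. -/
noncomputable def perpPart {p l : ℕ} (A B : Matrix (Fin p) (Fin l) ℝ) :
    Matrix (Fin p) (Fin l) ℝ :=
  Matrix.toEuclideanLin.symm
    (projMap (colSpace A)ᗮ ∘ₗ Matrix.toEuclideanLin B ∘ₗ projMap (colSpace Aᵀ)ᗮ)

open scoped RealInnerProductSpace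

namespace NucAux

variable {p l : ℕ}

lemma hT (X : Matrix (Fin p) (Fin l) ℝ) : (Xᵀ * X).IsHermitian := by
  simpa using Matrix.isHermitian_conjTranspose_mul_self X

/-- singular values -/
noncomputable def sval (X : Matrix (Fin p) (Fin l) ℝ) (j : Fin l) : ℝ :=
  Real.sqrt ((NucAux.hT X).eigenvalues j)

/-- right singular vectors -/
noncomputable def rv (X : Matrix (Fin p) (Fin l) ℝ) (j : Fin l) :
    EuclideanSpace ℝ (Fin l) :=
  (NucAux.hT X).eigenvectorBasis j

/-- left singular vectors -/
noncomputable def lv (X : Matrix (Fin p) (Fin l) ℝ) (j : Fin l) :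
    EuclideanSpace ℝ (Fin p) :=
  (sval X j)⁻¹ • Matrix.toEuclideanLin X (rv X j)

lemma nucNorm_eq (X : Matrix (Fin p) (Fin l) ℝ) : nucNorm X = ∑ j, sval X j := rfl

lemma sval_nonneg (X : Matrix (Fin p) (Fin l) ℝ) (j : Fin l) : 0 ≤ sval X j :=
  Real.sqrt_nonneg _

lemma eig_nonneg (X : Matrix (Fin p) (Fin l) ℝ) (j : Fin l) :
    0 ≤ (NucAux.hT X).eigenvalues j :=
  (Matrix.posSemidef_conjTranspose_mul_self X).eigenvalues_nonneg j

lemma sq_sval (X : Matrix (Fin p) (Fin l) ℝ) (j : Fin l) :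
    sval X j ^ 2 = (NucAux.hT X).eigenvalues j :=
  Real.sq_sqrt (eig_nonneg X j)

lemma toEuclideanLin_conj_mul (X : Matrix (Fin p) (Fin l) ℝ) :
    Matrix.toEuclideanLin (Xᴴ * X) =
      LinearMap.adjoint (Matrix.toEuclideanLin X) ∘ₗ Matrix.toEuclideanLin X := by
  rw [← Matrix.toEuclideanLin_conjTranspose_eq_adjoint]
  rw [Matrix.toEuclideanLin_eq_toLin, Matrix.toLin_mul _ (PiLp.basisFun 2 ℝ (Fin p)) _]
  rfl

lemma eigen_apply (X : Matrix (Fin p) (Fin l) ℝ) (j : Fin l) :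
    Matrix.toEuclideanLin (Xᴴ * X) (rv X j) =
      (NucAux.hT X).eigenvalues j • rv X j := by
  have h := (NucAux.hT X).mulVec_eigenvectorBasis j
  apply (WithLp.equiv 2 _).injective
  simpa [Matrix.toEuclideanLin_apply, rv] using h

lemma inner_fX_fX (X : Matrix (Fin p) (Fin l) ℝ) (j k : Fin l) :
    ⟪Matrix.toEuclideanLin X (rv X j), Matrix.toEuclideanLin X (rv X k)⟫ =
      if j = k then (NucAux.hT X).eigenvalues k else 0 := by
  have h1 : ⟪Matrix.toEuclideanLin X (rv X j), Matrix.toEuclideanLin X (rv X k)⟫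
      = ⟪rv X j, Matrix.toEuclideanLin (Xᴴ * X) (rv X k)⟫ := by
    rw [toEuclideanLin_conj_mul]
    simp [LinearMap.adjoint_inner_right]
  rw [h1, eigen_apply, real_inner_smul_right]
  have := orthonormal_iff_ite.mp
    (NucAux.hT X).eigenvectorBasis.orthonormal j k
  rw [rv, rv, this]
  split <;> simp

lemma fX_rv (X : Matrix (Fin p) (Fin l) ℝ) (j : Fin l) :
    Matrix.toEuclideanLin X (rv X j) = sval X j • lv X j := by
  by_cases h : sval X j = 0
  · have h0 : (NucAux.hT X).eigenvalues j = 0 := by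
      rw [← sq_sval, h]; ring
    have : ⟪Matrix.toEuclideanLin X (rv X j), Matrix.toEuclideanLin X (rv X j)⟫ = 0 := by
      rw [inner_fX_fX, if_pos rfl, h0]
    rw [h, zero_smul]
    exact inner_self_eq_zero.mp this
  · rw [lv, smul_smul, mul_inv_cancel₀ h, one_smul]

lemma inner_lv_lv (X : Matrix (Fin p) (Fin l) ℝ) (j k : Fin l) (hj : sval X j ≠ 0)
    (hk : sval X k ≠ 0) :
    ⟪lv X j, lv X k⟫ = if j = k then 1 else 0 := by
  rw [lv, lv, real_inner_smul_left, real_inner_smul_right, inner_fX_fX]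
  split_ifs with h
  · subst h
    rw [← sq_sval X j, sq]
    field_simp
  · ring

lemma norm_lv_sq_le (X : Matrix (Fin p) (Fin l) ℝ) (j : Fin l) : ‖lv X j‖ ^ 2 ≤ 1 := by
  by_cases h : sval X j = 0
  · simp [lv, h]
  · rw [← real_inner_self_eq_norm_sq, inner_lv_lv X j j h h]
    simp

lemma lv_mem_colSpace (X : Matrix (Fin p) (Fin l) ℝ) (j : Fin l) : lv X j ∈ colSpace X :=
  Submodule.smul_mem _ _ ⟨rv X j, rfl⟩

lemma transpose_toEuclideanLin (X : Matrix (Fin p) (Fin l) ℝ) :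
    Matrix.toEuclideanLin Xᵀ = LinearMap.adjoint (Matrix.toEuclideanLin X) := by
  rw [← Matrix.toEuclideanLin_conjTranspose_eq_adjoint]
  congr 1

lemma rv_mem (X : Matrix (Fin p) (Fin l) ℝ) (j : Fin l) (hj : sval X j ≠ 0) :
    rv X j ∈ colSpace Xᵀ := by
  have hlam : (NucAux.hT X).eigenvalues j ≠ 0 := by
    intro h0
    exact hj (by rw [sval, h0, Real.sqrt_zero])
  have h := eigen_apply X j
  rw [toEuclideanLin_conj_mul] at h
  have : rv X j = ((NucAux.hT X).eigenvalues j)⁻¹ •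
      (LinearMap.adjoint (Matrix.toEuclideanLin X) (Matrix.toEuclideanLin X (rv X j))) := by
    rw [← LinearMap.comp_apply, h, smul_smul, inv_mul_cancel₀ hlam, one_smul]
  rw [this, colSpace, transpose_toEuclideanLin]
  exact Submodule.smul_mem _ _ ⟨_, rfl⟩

/-- Bessel-based duality bound. -/
lemma dual_le {ι : Type} [Fintype ι] (X : Matrix (Fin p) (Fin l) ℝ)
    (u : ι → EuclideanSpace ℝ (Fin p)) (v : ι → EuclideanSpace ℝ (Fin l))
    (hu : Orthonormal ℝ u) (hv : Orthonormal ℝ v) :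
    ∑ i, ⟪u i, Matrix.toEuclideanLin X (v i)⟫ ≤ nucNorm X := by
  have expand : ∀ i, ⟪u i, Matrix.toEuclideanLin X (v i)⟫ =
      ∑ j, sval X j * (⟪rv X j, v i⟫ * ⟪u i, lv X j⟫) := by
    intro i
    have hv' : v i = ∑ j, ⟪rv X j, v i⟫ • rv X j := by
      have := (NucAux.hT X).eigenvectorBasis.sum_repr (v i)
      conv_lhs => rw [← this]
      refine Finset.sum_congr rfl fun j _ => ?_
      rw [(NucAux.hT X).eigenvectorBasis.repr_apply_apply]
      rfl
    conv_lhs => rw [hv']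
    rw [map_sum, inner_sum]
    refine Finset.sum_congr rfl fun j _ => ?_
    rw [LinearMap.map_smul, fX_rv, real_inner_smul_right, real_inner_smul_right]
    ring
  calc ∑ i, ⟪u i, Matrix.toEuclideanLin X (v i)⟫
      = ∑ j, ∑ i, sval X j * (⟪rv X j, v i⟫ * ⟪u i, lv X j⟫) := by
        rw [← Finset.sum_comm]
        exact Finset.sum_congr rfl fun i _ => expand i
    _ ≤ ∑ j, sval X j := by
        refine Finset.sum_le_sum fun j _ => ?_
        have step1 : ∑ i, sval X j * (⟪rv X j, v i⟫ * ⟪u i, lv X j⟫)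
            ≤ ∑ i, sval X j * ((⟪rv X j, v i⟫ ^ 2 + ⟪u i, lv X j⟫ ^ 2) / 2) := by
          refine Finset.sum_le_sum fun i _ => ?_
          refine mul_le_mul_of_nonneg_left ?_ (sval_nonneg X j)
          nlinarith [sq_nonneg (⟪rv X j, v i⟫ - ⟪u i, lv X j⟫)]
        refine step1.trans ?_
        rw [← Finset.mul_sum]
        have b1 : ∑ i, ⟪rv X j, v i⟫ ^ 2 ≤ 1 := by
          have := hv.sum_inner_products_le (s := Finset.univ) (rv X j)
          have hn : ‖rv X j‖ = 1 := (NucAux.hT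
            X).eigenvectorBasis.orthonormal.1 j
          calc ∑ i, ⟪rv X j, v i⟫ ^ 2 = ∑ i, ‖⟪v i, rv X j⟫‖ ^ 2 := by
                refine Finset.sum_congr rfl fun i _ => ?_
                rw [real_inner_comm, Real.norm_eq_abs, sq_abs]
            _ ≤ ‖rv X j‖ ^ 2 := this
            _ = 1 := by rw [hn]; norm_num
        have b2 : ∑ i, ⟪u i, lv X j⟫ ^ 2 ≤ 1 := by
          have := hu.sum_inner_products_le (s := Finset.univ) (lv X j)
          calc ∑ i, ⟪u i, lv X j⟫ ^ 2 = ∑ i, ‖⟪u i, lv X j⟫‖ ^ 2 := by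
                refine Finset.sum_congr rfl fun i _ => ?_
                rw [Real.norm_eq_abs, sq_abs]
            _ ≤ ‖lv X j‖ ^ 2 := this
            _ ≤ 1 := norm_lv_sq_le X j
        rw [← Finset.sum_div, Finset.sum_add_distrib]
        nlinarith [sval_nonneg X j]
    _ = nucNorm X := (nucNorm_eq X).symm

lemma inner_rv_rv (X : Matrix (Fin p) (Fin l) ℝ) (j k : Fin l) :
    ⟪rv X j, rv X k⟫ = if j = k then (1:ℝ) else 0 :=
  orthonormal_iff_ite.mp
    (NucAux.hT X).eigenvectorBasis.orthonormal j k

lemma achieve (X : Matrix (Fin p) (Fin l) ℝ) :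
    ∑ j, ⟪lv X j, Matrix.toEuclideanLin X (rv X j)⟫ = nucNorm X := by
  rw [nucNorm_eq]
  refine Finset.sum_congr rfl fun j _ => ?_
  rw [fX_rv, real_inner_smul_right]
  by_cases h : sval X j = 0
  · rw [h]; ring
  · rw [inner_lv_lv X j j h h, if_pos rfl, mul_one]


lemma projMap_mem {m : ℕ} (S : Submodule ℝ (EuclideanSpace ℝ (Fin m)))
    (x : EuclideanSpace ℝ (Fin m)) : projMap S x ∈ S := (S.orthogonalProjectionOnto x).2

lemma projMap_adjoint {m : ℕ} (S : Submodule ℝ (EuclideanSpace ℝ (Fin m))) :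
    LinearMap.adjoint (projMap S) = projMap S := by
  symm
  rw [LinearMap.eq_adjoint_iff]
  intro x y
  exact S.inner_starProjection_left_eq_right x y

lemma toEuclideanLin_perpPart (A H : Matrix (Fin p) (Fin l) ℝ) :
    Matrix.toEuclideanLin (perpPart A H) =
      projMap (colSpace A)ᗮ ∘ₗ Matrix.toEuclideanLin H ∘ₗ projMap (colSpace Aᵀ)ᗮ :=
  Matrix.toEuclideanLin.apply_symm_apply _

lemma perpPart_range (A H : Matrix (Fin p) (Fin l) ℝ) :
    colSpace (perpPart A H) ≤ (colSpace A)ᗮ := by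
  rintro x ⟨y, rfl⟩
  rw [toEuclideanLin_perpPart]
  exact projMap_mem _ _

lemma perpPart_range_T (A H : Matrix (Fin p) (Fin l) ℝ) :
    colSpace (perpPart A H)ᵀ ≤ (colSpace Aᵀ)ᗮ := by
  rintro x ⟨y, rfl⟩
  rw [transpose_toEuclideanLin, toEuclideanLin_perpPart, LinearMap.adjoint_comp,
    LinearMap.adjoint_comp, projMap_adjoint]
  exact projMap_mem _ _

lemma eigenvalues_congr {n : ℕ} {A B : Matrix (Fin n) (Fin n) ℝ} (h : A = B)
    (hA : A.IsHermitian) (hB : B.IsHermitian) : hA.eigenvalues = hB.eigenvalues := by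
  subst h; rfl

lemma nucNorm_neg (M : Matrix (Fin p) (Fin l) ℝ) : nucNorm (-M) = nucNorm M := by
  unfold nucNorm
  refine Finset.sum_congr rfl fun j _ => ?_
  congr 1
  exact congrFun (eigenvalues_congr (by simp) _ _) j

lemma kerA (A : Matrix (Fin p) (Fin l) ℝ) (x : EuclideanSpace ℝ (Fin l))
    (hx : x ∈ (colSpace Aᵀ)ᗮ) : Matrix.toEuclideanLin A x = 0 := by
  have h : ⟪Matrix.toEuclideanLin A x, Matrix.toEuclideanLin A x⟫ = 0 := by
    rw [← LinearMap.adjoint_inner_right, ← transpose_toEuclideanLin, real_inner_comm]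
    exact (Submodule.mem_orthogonal _ x).mp hx _ ⟨_, rfl⟩
  exact inner_self_eq_zero.mp h

/-- sum over support subtype recovers the nuclear norm -/
lemma achieve' (X : Matrix (Fin p) (Fin l) ℝ) :
    ∑ j : {j : Fin l // sval X j ≠ 0},
      ⟪lv X j.1, Matrix.toEuclideanLin X (rv X j.1)⟫ = nucNorm X := by
  rw [← achieve X]
  have h1 : ∑ j ∈ Finset.univ.filter (fun j => sval X j ≠ 0),
        ⟪lv X j, Matrix.toEuclideanLin X (rv X j)⟫ =
      ∑ j : {j : Fin l // sval X j ≠ 0}, ⟪lv X j.1, Matrix.toEuclideanLin X (rv X j.1)⟫ :=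
    Finset.sum_subtype _ (by intro x; simp) _
  rw [← h1]
  apply Finset.sum_subset (Finset.filter_subset _ _)
  intro j _ hj
  simp only [Finset.mem_filter, Finset.mem_univ, true_and, not_not] at hj
  rw [fX_rv, hj, zero_smul, inner_zero_right]

end NucAux

/-- Display (18): `‖A + H‖_* ≥ ‖A‖_* + ‖P⊥_A(H)‖_* − ‖P_A(H)‖_*`. -/
theorem stmt16 :
    ∀ (p l : ℕ) (A H : Matrix (Fin p) (Fin l) ℝ),
    nucNorm A + nucNorm (perpPart A H) - nucNorm (H - perpPart A H) ≤ nucNorm (A + H) := by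
  intro p l A H
  classical
  open NucAux in
  set B := perpPart A H with hB
  -- index types
  let ιA := {j : Fin l // NucAux.sval A j ≠ 0}
  let ιB := {j : Fin l // NucAux.sval B j ≠ 0}
  let u : ιA ⊕ ιB → EuclideanSpace ℝ (Fin p) :=
    Sum.elim (fun j => NucAux.lv A j.1) (fun j => NucAux.lv B j.1)
  let v : ιA ⊕ ιB → EuclideanSpace ℝ (Fin l) :=
    Sum.elim (fun j => NucAux.rv A j.1) (fun j => NucAux.rv B j.1)
  have memSA : ∀ j : ιA, NucAux.lv A j.1 ∈ colSpace A := fun j => NucAux.lv_mem_colSpace A j.1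
  have memSB : ∀ j : ιB, NucAux.lv B j.1 ∈ (colSpace A)ᗮ :=
    fun j => NucAux.perpPart_range A H (NucAux.lv_mem_colSpace B j.1)
  have memTA : ∀ j : ιA, NucAux.rv A j.1 ∈ colSpace Aᵀ := fun j => NucAux.rv_mem A j.1 j.2
  have memTB : ∀ j : ιB, NucAux.rv B j.1 ∈ (colSpace Aᵀ)ᗮ :=
    fun j => NucAux.perpPart_range_T A H (NucAux.rv_mem B j.1 j.2)
  have hu : Orthonormal ℝ u := by
    rw [orthonormal_iff_ite]
    rintro (j | j) (k | k)
    · simp only [u, Sum.elim_inl]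
      rw [NucAux.inner_lv_lv A j.1 k.1 j.2 k.2]
      simp [Subtype.coe_inj]
    · simp only [u, Sum.elim_inl, Sum.elim_inr]
      rw [Submodule.inner_right_of_mem_orthogonal (memSA j) (memSB k)]
      simp
    · simp only [u, Sum.elim_inl, Sum.elim_inr]
      rw [real_inner_comm, Submodule.inner_right_of_mem_orthogonal (memSA k) (memSB j)]
      simp
    · simp only [u, Sum.elim_inr]
      rw [NucAux.inner_lv_lv B j.1 k.1 j.2 k.2]
      simp [Subtype.coe_inj]
  have hv : Orthonormal ℝ v := by
    rw [orthonormal_iff_ite]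
    rintro (j | j) (k | k)
    · simp only [v, Sum.elim_inl]
      rw [NucAux.inner_rv_rv A j.1 k.1]
      simp [Subtype.coe_inj]
    · simp only [v, Sum.elim_inl, Sum.elim_inr]
      rw [Submodule.inner_right_of_mem_orthogonal (memTA j) (memTB k)]
      simp
    · simp only [v, Sum.elim_inl, Sum.elim_inr]
      rw [real_inner_comm, Submodule.inner_right_of_mem_orthogonal (memTA k) (memTB j)]
      simp
    · simp only [v, Sum.elim_inr]
      rw [NucAux.inner_rv_rv B j.1 k.1]
      simp [Subtype.coe_inj]
  have key : nucNorm A + nucNorm B =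
      ∑ i, ⟪u i, Matrix.toEuclideanLin (A + H) (v i)⟫ +
      ∑ i, ⟪u i, Matrix.toEuclideanLin (B - H) (v i)⟫ := by
    rw [← Finset.sum_add_distrib]
    have : ∀ i, ⟪u i, Matrix.toEuclideanLin (A + H) (v i)⟫ +
        ⟪u i, Matrix.toEuclideanLin (B - H) (v i)⟫ =
        ⟪u i, Matrix.toEuclideanLin A (v i)⟫ + ⟪u i, Matrix.toEuclideanLin B (v i)⟫ := by
      intro i
      rw [← inner_add_right, ← inner_add_right, ← LinearMap.add_apply, ← LinearMap.add_apply,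
        ← map_add, ← map_add]
      congr 2
      congr 1
      abel
    rw [Finset.sum_congr rfl fun i _ => this i, Finset.sum_add_distrib]
    rw [Fintype.sum_sum_type, Fintype.sum_sum_type]
    have hA1 : ∀ j : ιA, ⟪u (Sum.inl j), Matrix.toEuclideanLin B (v (Sum.inl j))⟫ = 0 := by
      intro j
      refine Submodule.inner_right_of_mem_orthogonal (memSA j) ?_
      exact NucAux.perpPart_range A H ⟨_, rfl⟩
    have hB1 : ∀ j : ιB, ⟪u (Sum.inr j), Matrix.toEuclideanLin A (v (Sum.inr j))⟫ = 0 := by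
      intro j
      have := NucAux.kerA A _ (memTB j)
      simp only [u, v, Sum.elim_inr] at *
      rw [this, inner_zero_right]
    simp only [hA1, hB1, Finset.sum_const_zero, add_zero, zero_add]
    simp only [u, v, Sum.elim_inl, Sum.elim_inr]
    rw [NucAux.achieve' A, NucAux.achieve' B]
  have d1 := NucAux.dual_le (A + H) u v hu hv
  have d2 := NucAux.dual_le (B - H) u v hu hv
  have hneg : nucNorm (H - B) = nucNorm (B - H) := by
    rw [← NucAux.nucNorm_neg (H - B), neg_sub]
  rw [hneg]
  linarith
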